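/- arXiv:2303.16585 — 4 statements merged into one kernel-verified Lean document; each statement's English description precedes it below -/
import Mathlib

section
/- Let μ be a probability measure on ℝ with μ([a,b]) = 1 for some reals a < b, and suppose its cumulative distribution function F_μ(x) = μ((−∞, x]) is L-Lipschitz. Let N ≥ 1, set z_j = a + j(b − a)/N for 0 ≤ j ≤ N, and define the projected measure ν = Σ_{j=1}^{N} μ((z_{j−1}, z_j])·δ_{z_j}, where δ_z is the Dirac measure at z. Then ν is a probability measure supported on the grid {z_0, …, z_N} and the squared Cramér distance satisfies ∫_ℝ (F_μ(x) − F_ν(x))² dx ≤ L²(b − a)³/(3N²). -/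
open MeasureTheory

theorem stmt_2 (μ : Measure ℝ) [IsProbabilityMeasure μ]
    (a b : ℝ) (hab : a < b) (hsupp : μ (Set.Icc a b) = 1)
    (L : ℝ)
    (hLip : ∀ x y : ℝ, |(μ (Set.Iic x)).toReal - (μ (Set.Iic y)).toReal| ≤ L * |x - y|)
    (N : ℕ) (hN : 1 ≤ N)
    (z : ℕ → ℝ) (hz : ∀ j : ℕ, z j = a + j * (b - a) / N)
    (ν : Measure ℝ)
    (hν : ν = ∑ j ∈ Finset.range N,
      (μ (Set.Ioc (z j) (z (j + 1)))) • Measure.dirac (z (j + 1))) :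
    IsProbabilityMeasure ν ∧
    ν ({x : ℝ | ∃ j : ℕ, j ≤ N ∧ x = z j}ᶜ) = 0 ∧
    (∫ x : ℝ, ((μ (Set.Iic x)).toReal - (ν (Set.Iic x)).toReal) ^ 2) ≤
      L ^ 2 * (b - a) ^ 3 / (3 * N ^ 2) := by
  have hN0 : (N : ℝ) ≠ 0 := Nat.cast_ne_zero.2 (by omega)
  have hNpos : (0 : ℝ) < N := by positivity
  have hh : (0 : ℝ) < (b - a) / N := div_pos (by linarith) hNpos
  set F : ℝ → ℝ := fun x => (μ (Set.Iic x)).toReal with hF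
  have hz0 : z 0 = a := by simp [hz]
  have hzN : z N = b := by rw [hz]; field_simp; ring
  have hzstep : ∀ j : ℕ, z (j + 1) - z j = (b - a) / N := by
    intro j; rw [hz, hz]; push_cast; ring
  have hzmono : StrictMono z := strictMono_nat_of_lt_succ (by
    intro n
    have := hzstep n
    linarith)
  have hμtop : ∀ s : Set ℝ, μ s ≠ ⊤ := fun s => measure_ne_top μ s
  have hFmono : Monotone F := by
    intro x y hxy
    exact ENNReal.toReal_mono (hμtop _) (measure_mono (Set.Iic_subset_Iic.2 hxy))
  have hcompl : μ (Set.Icc a b)ᶜ = 0 := by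
    rw [measure_compl measurableSet_Icc (hμtop _), hsupp, measure_univ, tsub_self]
  have hFlt : ∀ x : ℝ, x < a → μ (Set.Iic x) = 0 := by
    intro x hx
    refine measure_mono_null (fun y hy => ?_) hcompl
    simp only [Set.mem_Iic] at hy
    simp only [Set.mem_compl_iff, Set.mem_Icc, not_and_or, not_le]
    left; linarith
  have hL0 : 0 ≤ L := by
    have h := hLip 1 0
    simp only [sub_zero, abs_one, mul_one] at h
    exact le_trans (abs_nonneg _) h
  have hFa : F a = 0 := by
    have hle : F a ≤ 0 := by
      refine le_of_forall_pos_le_add (fun δ hδ => ?_)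
      have hε : (0:ℝ) < δ / (L + 1) := by positivity
      have h1 : F (a - δ / (L + 1)) = 0 := by
        rw [hF]; simp only; rw [hFlt _ (by linarith)]; simp
      have h2 := hLip a (a - δ / (L + 1))
      rw [show F a = (μ (Set.Iic a)).toReal from rfl] at *
      rw [hF] at h1
      simp only at h1
      rw [h1] at h2
      have h3 : |a - (a - δ / (L + 1))| = δ / (L + 1) := by
        rw [abs_of_nonneg (by linarith)]; ring
      rw [sub_zero, h3] at h2
      have h4 : L * (δ / (L + 1)) ≤ δ := by
        rw [← mul_div_assoc, div_le_iff₀ (by linarith : (0:ℝ) < L + 1)]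
        nlinarith
      calc (μ (Set.Iic a)).toReal ≤ |(μ (Set.Iic a)).toReal| := le_abs_self _
        _ ≤ L * (δ / (L + 1)) := h2
        _ ≤ δ := h4
        _ = 0 + δ := by ring
    exact le_antisymm hle ENNReal.toReal_nonneg
  have hFnonneg : ∀ x, 0 ≤ F x := fun x => ENNReal.toReal_nonneg
  have hFle1 : ∀ x, F x ≤ 1 := by
    intro x
    rw [hF]
    exact ENNReal.toReal_le_of_le_ofReal zero_le_one (by simpa using prob_le_one (μ := μ) (s := Set.Iic x))
  have hFb : F b = 1 := by
    have h1 : μ (Set.Iic b) = 1 := by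
      refine le_antisymm prob_le_one ?_
      calc (1 : ENNReal) = μ (Set.Icc a b) := hsupp.symm
        _ ≤ μ (Set.Iic b) := measure_mono (fun y hy => hy.2)
    rw [hF]; simp [h1]
  have hIoc : ∀ u v : ℝ, u ≤ v → (μ (Set.Ioc u v)).toReal = F v - F u := by
    intro u v huv
    have hset : Set.Ioc u v = Set.Iic v \ Set.Iic u := by
      ext y; simp only [Set.mem_Ioc, Set.mem_diff, Set.mem_Iic, not_le]; constructor
      · rintro ⟨h1, h2⟩; exact ⟨h2, h1⟩
      · rintro ⟨h1, h2⟩; exact ⟨h2, h1⟩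
    rw [hset, measure_diff (Set.Iic_subset_Iic.2 huv) measurableSet_Iic.nullMeasurableSet (hμtop _),
      ENNReal.toReal_sub_of_le (measure_mono (Set.Iic_subset_Iic.2 huv)) (hμtop _)]
  -- formula for ν (Iic x)
  have hνIic : ∀ x : ℝ, ν (Set.Iic x) =
      ∑ j ∈ Finset.range N, (if z (j + 1) ≤ x then μ (Set.Ioc (z j) (z (j + 1))) else 0) := by
    intro x
    rw [hν, Measure.finset_sum_apply]
    refine Finset.sum_congr rfl (fun j _ => ?_)
    rw [Measure.smul_apply, Measure.dirac_apply' _ measurableSet_Iic]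
    by_cases hc : z (j + 1) ≤ x
    · simp [Set.indicator_apply, Set.mem_Iic, hc]
    · simp [Set.indicator_apply, Set.mem_Iic, hc]
  have hGval : ∀ x : ℝ, (ν (Set.Iic x)).toReal =
      ∑ j ∈ Finset.range N, (if z (j + 1) ≤ x then F (z (j + 1)) - F (z j) else 0) := by
    intro x
    rw [hνIic x, ENNReal.toReal_sum (fun j _ => by split <;> simp [hμtop])]
    refine Finset.sum_congr rfl (fun j _ => ?_)
    split
    · exact hIoc _ _ (hzmono (Nat.lt_succ_self j)).le
    · simp
  have hGeq : ∀ (k : ℕ) (x : ℝ), k ≤ N →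
      (∀ j : ℕ, j < N → (z (j + 1) ≤ x ↔ j < k)) → (ν (Set.Iic x)).toReal = F (z k) := by
    intro k x hk hiff
    rw [hGval]
    have h1 : ∀ j ∈ Finset.range N,
        (if z (j + 1) ≤ x then F (z (j + 1)) - F (z j) else 0) =
        (if j < k then F (z (j + 1)) - F (z j) else 0) := by
      intro j hj
      rw [if_congr (hiff j (Finset.mem_range.1 hj)) rfl rfl]
    have h2 : (Finset.range N).filter (fun j => j < k) = Finset.range k := by
      ext j; simp only [Finset.mem_filter, Finset.mem_range]; omega
    rw [Finset.sum_congr rfl h1, ← Finset.sum_filter, h2,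
      Finset.sum_range_sub (fun i => F (z i)), hz0, hFa, sub_zero]
  -- node values
  have hGnode : ∀ k : ℕ, k ≤ N → (ν (Set.Iic (z k))).toReal = F (z k) := by
    intro k hk
    refine hGeq k (z k) hk (fun j _ => ?_)
    rw [hzmono.le_iff_le]
    omega
  -- cell values
  have hGcell : ∀ (j : ℕ), j < N → ∀ x : ℝ, z j ≤ x → x < z (j + 1) →
      (ν (Set.Iic x)).toReal = F (z j) := by
    intro j hj x hx1 hx2
    refine hGeq j x hj.le (fun i _ => ?_)
    constructor
    · intro h
      have : z (i + 1) < z (j + 1) := lt_of_le_of_lt h hx2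
      have := hzmono.lt_iff_lt.1 this
      omega
    · intro h
      have : z (i + 1) ≤ z j := hzmono.monotone (by omega)
      linarith
  -- probability measure
  have hνuniv : ν Set.univ = ∑ j ∈ Finset.range N, μ (Set.Ioc (z j) (z (j + 1))) := by
    rw [hν, Measure.finset_sum_apply]
    simp [Measure.smul_apply]
  have hνne : ν Set.univ ≠ ⊤ := by
    rw [hνuniv]
    exact (ENNReal.sum_lt_top.2 (fun j _ => (hμtop _).lt_top)).ne
  have hνtr : (ν Set.univ).toReal = 1 := by
    rw [hνuniv, ENNReal.toReal_sum (fun j _ => hμtop _)]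
    have : ∀ j ∈ Finset.range N, (μ (Set.Ioc (z j) (z (j + 1)))).toReal
        = F (z (j + 1)) - F (z j) := fun j _ => hIoc _ _ (hzmono (Nat.lt_succ_self j)).le
    rw [Finset.sum_congr rfl this, Finset.sum_range_sub (fun i => F (z i)), hz0, hzN, hFa, hFb,
      sub_zero]
  have hprob : IsProbabilityMeasure ν := by
    constructor
    have := (ENNReal.toReal_eq_toReal_iff' hνne ENNReal.one_ne_top).1
      (by rw [hνtr, ENNReal.toReal_one])
    exact this
  haveI := hprob
  refine ⟨hprob, ?_, ?_⟩
  · -- support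
    have hSfin : Set.Finite {x : ℝ | ∃ j : ℕ, j ≤ N ∧ x = z j} := by
      have : {x : ℝ | ∃ j : ℕ, j ≤ N ∧ x = z j} = z '' (Set.Iic N) := by
        ext x; simp [Set.mem_image, eq_comm]
      rw [this]
      exact (Set.finite_Iic N).image z
    have hS : MeasurableSet {x : ℝ | ∃ j : ℕ, j ≤ N ∧ x = z j}ᶜ :=
      hSfin.measurableSet.compl
    rw [hν, Measure.finset_sum_apply]
    refine Finset.sum_eq_zero (fun j hj => ?_)
    rw [Measure.smul_apply, Measure.dirac_apply' _ hS]
    have : z (j + 1) ∈ {x : ℝ | ∃ j : ℕ, j ≤ N ∧ x = z j} :=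
      ⟨j + 1, by simpa using Finset.mem_range.1 hj, rfl⟩
    simp [Set.indicator_apply, this]
  · -- integral bound
    set G : ℝ → ℝ := fun x => (ν (Set.Iic x)).toReal with hG
    set f : ℝ → ℝ := fun x => (F x - G x) ^ 2 with hf
    have hGmono : Monotone G := fun x y hxy =>
      ENNReal.toReal_mono (measure_ne_top ν _) (measure_mono (Set.Iic_subset_Iic.2 hxy))
    have hGnonneg : ∀ x, 0 ≤ G x := fun x => ENNReal.toReal_nonneg
    have hGle1 : ∀ x, G x ≤ 1 := by
      intro x
      rw [hG]
      refine ENNReal.toReal_le_of_le_ofReal zero_le_one ?_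
      simpa using prob_le_one (μ := ν) (s := Set.Iic x)
    have hfmeas : Measurable f := by
      exact ((hFmono.measurable.sub hGmono.measurable).pow_const 2)
    have hfbound : ∀ x, ‖f x‖ ≤ 1 := by
      intro x
      rw [hf]
      simp only [Real.norm_eq_abs, abs_pow, sq_abs]
      nlinarith [hFnonneg x, hFle1 x, hGnonneg x, hGle1 x]
    have hfzero_low : ∀ x : ℝ, x ≤ a → f x = 0 := by
      intro x hx
      have hFx : F x = 0 := le_antisymm (hFa ▸ hFmono hx) (hFnonneg x)
      have hGx : G x = 0 := by
        show (ν (Set.Iic x)).toReal = 0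
        have := hGeq 0 x (by omega) (fun j _ => by
          have ha : a < z (j + 1) := by rw [← hz0]; exact hzmono (Nat.succ_pos j)
          constructor
          · intro h
            exact absurd (h.trans hx) (not_le.2 ha)
          · intro h
            exact absurd h (Nat.not_lt_zero j))
        rw [this, hz0]
        exact hFa
      rw [hf]; simp [hFx, hGx]
    have hfzero_high : ∀ x : ℝ, b ≤ x → f x = 0 := by
      intro x hx
      have hFx : F x = 1 := le_antisymm (hFle1 x) (hFb ▸ hFmono hx)
      have hGx : G x = 1 := by
        show (ν (Set.Iic x)).toReal = 1
        have := hGeq N x le_rfl (fun j hj => by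
          constructor
          · intro _; omega
          · intro _
            have : z (j + 1) ≤ z N := hzmono.monotone (by omega)
            rw [hzN] at this; linarith)
        rw [this, hzN]
        exact hFb
      rw [hf]; simp [hFx, hGx]
    have hIndEq : ∀ x : ℝ, f x = (Set.Ioc a b).indicator f x := by
      intro x
      by_cases hx : x ∈ Set.Ioc a b
      · rw [Set.indicator_of_mem hx]
      · rw [Set.indicator_of_notMem hx]
        rcases not_and_or.1 hx with h | h
        · exact hfzero_low x (le_of_not_gt h)
        · exact hfzero_high x (le_of_not_gt (fun hb => h hb.le))
    have hIntOn : ∀ u v : ℝ, IntegrableOn f (Set.Ioc u v) := by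
      intro u v
      exact Measure.integrableOn_of_bounded (M := 1) measure_Ioc_lt_top.ne
        hfmeas.aestronglyMeasurable (Filter.Eventually.of_forall hfbound)
    have hII : ∀ i : ℕ, IntervalIntegrable f volume (z i) (z (i + 1)) :=
      fun i => (intervalIntegrable_iff_integrableOn_Ioc_of_le
        (hzmono (Nat.lt_succ_self i)).le).2 (hIntOn _ _)
    -- pointwise bound on each cell
    have hcellbound : ∀ j : ℕ, j < N → ∀ x ∈ Set.Icc (z j) (z (j + 1)),
        f x ≤ L ^ 2 * (x - z j) ^ 2 := by
      intro j hj x hx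
      rcases eq_or_lt_of_le hx.2 with heq | hlt
      · -- x = z (j+1): f x = 0
        have hGn : G x = F x := by
          show (ν (Set.Iic x)).toReal = F x
          rw [heq]
          exact hGnode (j + 1) (by omega)
        show (F x - G x) ^ 2 ≤ L ^ 2 * (x - z j) ^ 2
        rw [hGn, sub_self]
        simp only [ne_eq, OfNat.ofNat_ne_zero, not_false_eq_true, zero_pow]
        positivity
      · have hGx : G x = F (z j) := hGcell j hj x hx.1 hlt
        have h1 : |F x - F (z j)| ≤ L * (x - z j) := by
          have := hLip x (z j)
          rwa [abs_of_nonneg (sub_nonneg.2 hx.1)] at this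
        have h2 : (F x - F (z j)) ^ 2 ≤ (L * (x - z j)) ^ 2 := by
          have ha := abs_nonneg (F x - F (z j))
          have hb := le_abs_self (F x - F (z j))
          have hc := neg_abs_le (F x - F (z j))
          exact sq_le_sq' (by linarith) (by linarith)
        show (F x - G x) ^ 2 ≤ L ^ 2 * (x - z j) ^ 2
        rw [hGx]
        calc (F x - F (z j)) ^ 2 ≤ (L * (x - z j)) ^ 2 := h2
          _ = L ^ 2 * (x - z j) ^ 2 := by ring
    -- per-cell integral bound
    have hcellint : ∀ j : ℕ, j < N →
        (∫ x in (z j)..(z (j + 1)), f x) ≤ L ^ 2 * ((b - a) / N) ^ 3 / 3 := by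
      intro j hj
      have hle : z j ≤ z (j + 1) := (hzmono (Nat.lt_succ_self j)).le
      have hg : IntervalIntegrable (fun x => L ^ 2 * (x - z j) ^ 2) volume (z j) (z (j + 1)) :=
        (Continuous.intervalIntegrable (continuous_const.mul ((continuous_id.sub continuous_const).pow 2)) _ _)
      have hmono := intervalIntegral.integral_mono_on hle (hII j) hg (hcellbound j hj)
      refine hmono.trans ?_
      have hval : (∫ x in (z j)..(z (j + 1)), L ^ 2 * (x - z j) ^ 2)
          = L ^ 2 * ((z (j + 1) - z j) ^ 3 / 3) := by
        rw [intervalIntegral.integral_const_mul]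
        congr 1
        have := intervalIntegral.integral_comp_sub_right (a := z j) (b := z (j + 1))
          (fun x => x ^ 2) (z j)
        rw [this, sub_self, integral_pow]
        norm_num
      rw [hval, hzstep j]
      exact le_of_eq (by ring)
    -- assemble
    have step1 : (∫ x : ℝ, f x) = ∫ x in Set.Ioc a b, f x := by
      rw [← integral_indicator measurableSet_Ioc]
      exact integral_congr_ae (Filter.Eventually.of_forall hIndEq)
    have step2 : (∫ x in Set.Ioc a b, f x) = ∫ x in a..b, f x :=
      (intervalIntegral.integral_of_le hab.le).symm
    have step3 : (∫ x in a..b, f x)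
        = ∑ j ∈ Finset.range N, ∫ x in (z j)..(z (j + 1)), f x := by
      have := intervalIntegral.sum_integral_adjacent_intervals (μ := volume) (f := f)
        (a := z) (n := N) (fun i _ => hII i)
      rw [hz0, hzN] at this
      exact this.symm
    have step4 : (∑ j ∈ Finset.range N, ∫ x in (z j)..(z (j + 1)), f x)
        ≤ ∑ j ∈ Finset.range N, L ^ 2 * ((b - a) / N) ^ 3 / 3 :=
      Finset.sum_le_sum (fun j hj => hcellint j (Finset.mem_range.1 hj))
    have step5 : (∑ j ∈ Finset.range N, L ^ 2 * ((b - a) / N) ^ 3 / 3 : ℝ)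
        = L ^ 2 * (b - a) ^ 3 / (3 * N ^ 2) := by
      rw [Finset.sum_const, Finset.card_range, nsmul_eq_mul]
      field_simp
    show (∫ x : ℝ, f x) ≤ L ^ 2 * (b - a) ^ 3 / (3 * (N : ℝ) ^ 2)
    rw [step1, step2, step3]
    exact le_trans step4 (le_of_eq step5)
end

section
/- Let μ be a probability measure on ℝ with μ([a,b]) = 1 for some reals a < b, and suppose its cumulative distribution function F_μ(x) = μ((−∞, x]) is L-Lipschitz. Let N ≥ 1 and set z_j = a + j(b − a)/N for 0 ≤ j ≤ N. Then there exists a probability measure ν supported on the finite grid {z_0, …, z_N} such that ∫ x dν(x) = ∫ x dμ(x) (expectation is preserved) and ∫_ℝ (F_μ(x) − F_ν(x))² dx ≤ L²(b − a)³/N². -/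
open MeasureTheory Finset

/-- index of the grid cell containing `x` (clipped to `[0, N-1]`). -/
noncomputable def cpk (a h : ℝ) (N : ℕ) (x : ℝ) : ℕ := min (⌊(x - a) / h⌋.toNat) (N - 1)

/-- clamped barycentric coordinate of `x` in its cell. -/
noncomputable def cpt (a h : ℝ) (N : ℕ) (x : ℝ) : ℝ :=
  min 1 (max 0 ((x - a) / h - cpk a h N x))

/-- hat-function weight of grid point `j` at `x`. -/
noncomputable def cpw (a h : ℝ) (N : ℕ) (j : ℕ) (x : ℝ) : ℝ :=
  (if j = cpk a h N x then 1 - cpt a h N x else 0) +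
  (if j = cpk a h N x + 1 then cpt a h N x else 0)

lemma cpt_nonneg (a h : ℝ) (N : ℕ) (x : ℝ) : 0 ≤ cpt a h N x :=
  le_min zero_le_one (le_max_left _ _)

lemma cpt_le_one (a h : ℝ) (N : ℕ) (x : ℝ) : cpt a h N x ≤ 1 := min_le_left _ _

lemma cpw_nonneg (a h : ℝ) (N : ℕ) (j : ℕ) (x : ℝ) : 0 ≤ cpw a h N j x := by
  unfold cpw
  have h1 := cpt_nonneg a h N x
  have h2 := cpt_le_one a h N x
  split_ifs <;> linarith

lemma cpw_le_one (a h : ℝ) (N : ℕ) (j : ℕ) (x : ℝ) : cpw a h N j x ≤ 1 := by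
  unfold cpw
  have h1 := cpt_nonneg a h N x
  have h2 := cpt_le_one a h N x
  split_ifs with hA hB hB <;> first | omega | linarith

lemma cpk_meas (a h : ℝ) (N : ℕ) : Measurable (cpk a h N) := by
  have : Measurable fun x : ℝ => ⌊(x - a) / h⌋ :=
    Int.measurable_floor.comp ((measurable_id.sub measurable_const).div measurable_const)
  exact Measurable.comp (measurable_from_top (f := fun m : ℤ => min m.toNat (N - 1))) this

lemma cpt_meas (a h : ℝ) (N : ℕ) : Measurable (cpt a h N) := by
  have hk : Measurable fun x : ℝ => ((cpk a h N x : ℕ) : ℝ) :=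
    measurable_from_top.comp (cpk_meas a h N)
  exact measurable_const.min ((measurable_const.max
    (((measurable_id.sub measurable_const).div measurable_const).sub hk)))

lemma cpw_meas (a h : ℝ) (N : ℕ) (j : ℕ) : Measurable (cpw a h N j) := by
  have hs : ∀ c : ℕ, MeasurableSet {x : ℝ | j = cpk a h N x + c} := by
    intro c
    have : {x : ℝ | j = cpk a h N x + c} = cpk a h N ⁻¹' {n | j = n + c} := rfl
    rw [this]
    exact (cpk_meas a h N) (by trivial)
  have h1 : Measurable fun x => if j = cpk a h N x then 1 - cpt a h N x else 0 := by
    have := hs 0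
    simp only [Nat.add_zero] at this
    exact Measurable.ite this (measurable_const.sub (cpt_meas a h N)) measurable_const
  have h2 : Measurable fun x => if j = cpk a h N x + 1 then cpt a h N x else 0 :=
    Measurable.ite (hs 1) (cpt_meas a h N) measurable_const
  exact h1.add h2

lemma cpk_le (a h : ℝ) (N : ℕ) (x : ℝ) : cpk a h N x ≤ N - 1 := min_le_right _ _

lemma cpw_sum (a h : ℝ) (N : ℕ) (hN : 1 ≤ N) (x : ℝ) :
    ∑ j ∈ range (N + 1), cpw a h N j x = 1 := by
  unfold cpw
  rw [Finset.sum_add_distrib, Finset.sum_ite_eq', Finset.sum_ite_eq']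
  have hk := cpk_le a h N x
  have h1 : cpk a h N x ∈ range (N + 1) := Finset.mem_range.2 (by omega)
  have h2 : cpk a h N x + 1 ∈ range (N + 1) := Finset.mem_range.2 (by omega)
  rw [if_pos h1, if_pos h2]; ring

lemma cpk_bracket (a h : ℝ) (N : ℕ) (hh : 0 < h) (hN : 1 ≤ N) {x : ℝ}
    (hx : a ≤ x) (hxb : x ≤ a + N * h) :
    (cpk a h N x : ℝ) ≤ (x - a) / h ∧ (x - a) / h ≤ cpk a h N x + 1 := by
  set r : ℝ := (x - a) / h with hr
  have hr0 : 0 ≤ r := div_nonneg (by linarith) hh.le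
  have hrN : r ≤ N := by
    rw [hr, div_le_iff₀ hh]; linarith
  have hfl0 : (0 : ℤ) ≤ ⌊r⌋ := Int.le_floor.2 (by exact_mod_cast hr0)
  have hcast : ((⌊r⌋.toNat : ℕ) : ℝ) = (⌊r⌋ : ℝ) := by
    exact_mod_cast congrArg (fun n : ℤ => (n : ℝ)) (Int.toNat_of_nonneg hfl0)
  constructor
  · calc ((cpk a h N x : ℕ) : ℝ) ≤ ((⌊r⌋.toNat : ℕ) : ℝ) := by
          exact_mod_cast Nat.cast_le.2 (min_le_left _ _)
      _ = (⌊r⌋ : ℝ) := hcast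
      _ ≤ r := Int.floor_le r
  · by_cases hc : ⌊r⌋.toNat ≤ N - 1
    · have hk : cpk a h N x = ⌊r⌋.toNat := min_eq_left hc
      rw [hk]
      have := Int.lt_floor_add_one r
      rw [hcast.symm] at this
      linarith [this.le]
    · have hk : cpk a h N x = N - 1 := min_eq_right (by omega : N - 1 ≤ ⌊r⌋.toNat)
      rw [hk]
      have : ((N - 1 : ℕ) : ℝ) = (N : ℝ) - 1 := by
        have : (1 : ℕ) ≤ N := hN
        push_cast [Nat.cast_sub this]; ring
      rw [this]; linarith

lemma cpt_eq (a h : ℝ) (N : ℕ) (hh : 0 < h) (hN : 1 ≤ N) {x : ℝ}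
    (hx : a ≤ x) (hxb : x ≤ a + N * h) :
    cpt a h N x = (x - a) / h - cpk a h N x := by
  obtain ⟨h1, h2⟩ := cpk_bracket a h N hh hN hx hxb
  unfold cpt
  rw [max_eq_right (by linarith), min_eq_right (by linarith)]

lemma cpw_sumz (a h : ℝ) (N : ℕ) (hh : 0 < h) (hN : 1 ≤ N) {x : ℝ}
    (hx : a ≤ x) (hxb : x ≤ a + N * h) :
    ∑ j ∈ range (N + 1), cpw a h N j x * (a + j * h) = x := by
  unfold cpw
  have hsplit : ∀ j ∈ range (N + 1),
      ((if j = cpk a h N x then 1 - cpt a h N x else 0) +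
        (if j = cpk a h N x + 1 then cpt a h N x else 0)) * (a + j * h)
      = (if j = cpk a h N x then (1 - cpt a h N x) * (a + j * h) else 0) +
        (if j = cpk a h N x + 1 then cpt a h N x * (a + j * h) else 0) := by
    intro j _
    split_ifs <;> ring
  rw [Finset.sum_congr rfl hsplit, Finset.sum_add_distrib,
    Finset.sum_ite_eq', Finset.sum_ite_eq']
  have hk := cpk_le a h N x
  have h1 : cpk a h N x ∈ range (N + 1) := Finset.mem_range.2 (by omega)
  have h2 : cpk a h N x + 1 ∈ range (N + 1) := Finset.mem_range.2 (by omega)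
  rw [if_pos h1, if_pos h2, cpt_eq a h N hh hN hx hxb]
  have hxa : ((x - a) / h) * h = x - a := div_mul_cancel₀ _ hh.ne'
  push_cast
  ring_nf
  ring_nf at hxa
  nlinarith [hxa]

lemma cpw_psum (a h : ℝ) (N : ℕ) (m : ℕ) (x : ℝ) :
    ∑ j ∈ range (m + 1), cpw a h N j x =
      (if cpk a h N x ≤ m then 1 - cpt a h N x else 0) +
      (if cpk a h N x + 1 ≤ m then cpt a h N x else 0) := by
  unfold cpw
  rw [Finset.sum_add_distrib, Finset.sum_ite_eq', Finset.sum_ite_eq']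
  simp only [Finset.mem_range, Nat.lt_succ_iff]

lemma cpw_psum_lower (a h : ℝ) (N : ℕ) (hh : 0 < h) (hN : 1 ≤ N) {m : ℕ} (hm : m ≤ N - 1)
    {x : ℝ} (hx : a ≤ x) (hxb : x ≤ a + N * h) :
    Set.indicator (Set.Iic (a + m * h)) (fun _ => (1 : ℝ)) x ≤
      ∑ j ∈ range (m + 1), cpw a h N j x := by
  rw [cpw_psum]
  have ht0 := cpt_nonneg a h N x
  have ht1 := cpt_le_one a h N x
  by_cases hxm : x ≤ a + m * h
  · rw [Set.indicator_of_mem (Set.mem_Iic.2 hxm)]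
    have hrm : (x - a) / h ≤ m := by
      rw [div_le_iff₀ hh]; linarith
    have hklem : cpk a h N x ≤ m := by
      have h1 : ⌊(x - a) / h⌋ ≤ (m : ℤ) := by
        have := Int.floor_mono (show (x - a) / h ≤ ((m : ℤ) : ℝ) by exact_mod_cast hrm)
        simpa using this
      have h2 : ⌊(x - a) / h⌋.toNat ≤ m := Int.toNat_le.2 h1
      exact le_trans (min_le_left _ _) h2
    by_cases hk1 : cpk a h N x + 1 ≤ m
    · rw [if_pos hklem, if_pos hk1]; linarith
    · have hkm : cpk a h N x = m := by omega
      have ht : cpt a h N x = 0 := by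
        rw [cpt_eq a h N hh hN hx hxb]
        obtain ⟨hb1, _⟩ := cpk_bracket a h N hh hN hx hxb
        have : (x - a) / h = (cpk a h N x : ℝ) := by
          rw [hkm]; exact le_antisymm hrm (by rw [← hkm]; exact hb1)
        rw [this]; ring
      rw [if_pos hklem, if_neg hk1, ht]; linarith
  · rw [Set.indicator_of_notMem (by simpa using hxm)]
    split_ifs <;> linarith

lemma cpw_psum_upper (a h : ℝ) (N : ℕ) (hh : 0 < h) (hN : 1 ≤ N) {m : ℕ} (hm : m ≤ N - 1)
    {x : ℝ} (hx : a ≤ x) (hxb : x ≤ a + N * h) :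
    ∑ j ∈ range (m + 1), cpw a h N j x ≤
      Set.indicator (Set.Iic (a + (m + 1) * h)) (fun _ => (1 : ℝ)) x := by
  rw [cpw_psum]
  have ht0 := cpt_nonneg a h N x
  have ht1 := cpt_le_one a h N x
  by_cases hxm : x ≤ a + (m + 1) * h
  · rw [Set.indicator_of_mem (Set.mem_Iic.2 hxm)]
    split_ifs <;> linarith
  · rw [Set.indicator_of_notMem (by simpa using hxm)]
    push_neg at hxm
    have hrm : ((m : ℝ) + 1) ≤ (x - a) / h := by
      rw [le_div_iff₀ hh]; linarith
    have hfl : (m : ℤ) + 1 ≤ ⌊(x - a) / h⌋ := Int.le_floor.2 (by exact_mod_cast hrm)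
    have htn : m + 1 ≤ ⌊(x - a) / h⌋.toNat := by omega
    have hmN : m + 1 ≤ N - 1 := by
      have hrm' : ((m : ℝ) + 1) < (x - a) / h := by
        rw [lt_div_iff₀ hh]; linarith
      have hrN : (x - a) / h ≤ N := by rw [div_le_iff₀ hh]; linarith
      have : ((m : ℝ) + 1) < N := lt_of_lt_of_le hrm' hrN
      have : m + 1 < N := by exact_mod_cast this
      omega
    have hk : m < cpk a h N x := by
      have h2 : m + 1 ≤ cpk a h N x := le_min htn hmN
      omega
    rw [if_neg (by omega), if_neg (by omega)]; norm_num

theorem stmt_3 (μ : Measure ℝ) [IsProbabilityMeasure μ]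
    (a b : ℝ) (hab : a < b) (hsupp : μ (Set.Icc a b) = 1)
    (L : ℝ)
    (hLip : ∀ x y : ℝ, |(μ (Set.Iic x)).toReal - (μ (Set.Iic y)).toReal| ≤ L * |x - y|)
    (N : ℕ) (hN : 1 ≤ N)
    (z : ℕ → ℝ) (hz : ∀ j : ℕ, z j = a + j * (b - a) / N) :
    ∃ ν : Measure ℝ, IsProbabilityMeasure ν ∧
      ν ({x : ℝ | ∃ j : ℕ, j ≤ N ∧ x = z j}ᶜ) = 0 ∧
      (∫ x : ℝ, x ∂ν) = (∫ x : ℝ, x ∂μ) ∧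
      (∫ x : ℝ, ((μ (Set.Iic x)).toReal - (ν (Set.Iic x)).toReal) ^ 2) ≤
        L ^ 2 * (b - a) ^ 3 / N ^ 2 := by
  have hN0 : (0 : ℝ) < N := by exact_mod_cast hN
  set d : ℝ := (b - a) / N with hd
  have hdpos : 0 < d := div_pos (by linarith) hN0
  have hz' : ∀ j : ℕ, z j = a + j * d := by
    intro j; rw [hz j, hd]; ring
  have hb_eq : a + N * d = b := by
    rw [hd]; field_simp; ring
  -- a.e. membership in [a, b]
  have hcompl : μ (Set.Icc a b)ᶜ = 0 := by
    have := measure_compl (measurableSet_Icc (a := a) (b := b)) (measure_ne_top μ _)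
    rw [hsupp, measure_univ] at this
    simpa using this
  have hae : ∀ᵐ x ∂μ, x ∈ Set.Icc a b := mem_ae_iff.2 hcompl
  -- the weights
  have hwint : ∀ j : ℕ, Integrable (cpw a d N j) μ := by
    intro j
    refine Integrable.mono' (integrable_const 1) ((cpw_meas a d N j).aestronglyMeasurable) ?_
    filter_upwards with x
    rw [Real.norm_eq_abs, abs_le]
    exact ⟨by linarith [cpw_nonneg a d N j x], cpw_le_one a d N j x⟩
  set q : ℕ → ℝ := fun j => ∫ x, cpw a d N j x ∂μ with hqdef
  have hq0 : ∀ j, 0 ≤ q j := fun j => integral_nonneg (fun x => cpw_nonneg a d N j x)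
  have hqsum : ∑ j ∈ range (N + 1), q j = 1 := by
    rw [hqdef]
    rw [← integral_finset_sum _ (fun j _ => hwint j)]
    simp only [cpw_sum a d N hN]
    simp [measure_univ]
  -- the measure
  set ν : Measure ℝ := ∑ j ∈ range (N + 1), ENNReal.ofReal (q j) • Measure.dirac (z j) with hν
  have hνapp : ∀ s : Set ℝ, MeasurableSet s →
      ν s = ∑ j ∈ range (N + 1), ENNReal.ofReal (q j) * Set.indicator s 1 (z j) := by
    intro s hs
    rw [hν, Measure.finset_sum_apply]
    refine Finset.sum_congr rfl fun j _ => ?_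
    rw [Measure.smul_apply, Measure.dirac_apply' _ hs, smul_eq_mul]
  have hνprob : IsProbabilityMeasure ν := by
    constructor
    rw [hνapp Set.univ MeasurableSet.univ]
    simp only [Set.indicator_univ, Pi.one_apply, mul_one]
    rw [← ENNReal.ofReal_sum_of_nonneg (fun j _ => hq0 j), hqsum]
    norm_num
  refine ⟨ν, hνprob, ?_, ?_, ?_⟩
  · -- grid support
    have hfin : ({x : ℝ | ∃ j : ℕ, j ≤ N ∧ x = z j}).Finite := by
      have : {x : ℝ | ∃ j : ℕ, j ≤ N ∧ x = z j} ⊆ z '' (Set.Iic N) := by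
        rintro x ⟨j, hj, rfl⟩; exact ⟨j, hj, rfl⟩
      exact ((Set.finite_Iic N).image z).subset this
    rw [hνapp _ hfin.measurableSet.compl]
    refine Finset.sum_eq_zero fun j hj => ?_
    rw [Set.indicator_of_notMem, mul_zero]
    simp only [Set.mem_compl_iff, not_not, Set.mem_setOf_eq]
    exact ⟨j, by simpa [Nat.lt_succ_iff] using hj, rfl⟩
  · -- mean preservation
    have hint_dirac : ∀ j ∈ range (N + 1),
        Integrable (fun x : ℝ => x) (ENNReal.ofReal (q j) • Measure.dirac (z j)) := by
      intro j _
      refine Integrable.smul_measure ?_ ENNReal.ofReal_ne_top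
      have heq : (fun x : ℝ => x) =ᵐ[Measure.dirac (z j)] (fun _ => z j) := by
        rw [ae_dirac_eq]; exact Filter.eventually_pure.2 rfl
      exact (integrable_const (z j)).congr heq.symm
    rw [hν, integral_finset_sum_measure hint_dirac]
    have hterm : ∀ j ∈ range (N + 1),
        (∫ x : ℝ, x ∂(ENNReal.ofReal (q j) • Measure.dirac (z j))) = q j * z j := by
      intro j _
      rw [integral_smul_measure, integral_dirac, smul_eq_mul,
        ENNReal.toReal_ofReal (hq0 j)]
    rw [Finset.sum_congr rfl hterm]
    have hswap : ∑ j ∈ range (N + 1), q j * z j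
        = ∫ x, ∑ j ∈ range (N + 1), cpw a d N j x * z j ∂μ := by
      rw [integral_finset_sum _ (fun j _ => (hwint j).mul_const (z j))]
      exact Finset.sum_congr rfl fun j _ => (integral_mul_const (z j) _).symm
    rw [hswap]
    refine integral_congr_ae ?_
    filter_upwards [hae] with x hx
    have := cpw_sumz a d N hdpos hN hx.1 (by rw [hb_eq]; exact hx.2)
    simp only [hz']
    exact this
  · -- Cramér bound
    have hνIic : ∀ x : ℝ, ν (Set.Iic x) =
        ∑ j ∈ range (N + 1), if z j ≤ x then ENNReal.ofReal (q j) else 0 := by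
      intro x
      rw [hνapp _ measurableSet_Iic]
      refine Finset.sum_congr rfl fun j _ => ?_
      by_cases hzx : z j ≤ x <;> simp [Set.indicator_apply, Set.mem_Iic, hzx]
    have hQ : ∀ m : ℕ, m ≤ N - 1 →
        (μ (Set.Iic (a + m * d))).toReal ≤ ∑ j ∈ range (m + 1), q j ∧
        ∑ j ∈ range (m + 1), q j ≤ (μ (Set.Iic (a + (m + 1) * d))).toReal := by
      intro m hm
      have hSint : Integrable (fun x => ∑ j ∈ range (m + 1), cpw a d N j x) μ :=
        integrable_finset_sum _ (fun j _ => hwint j)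
      have hsum_int : ∫ x, ∑ j ∈ range (m + 1), cpw a d N j x ∂μ
          = ∑ j ∈ range (m + 1), q j := integral_finset_sum _ (fun j _ => hwint j)
      constructor
      · calc (μ (Set.Iic (a + m * d))).toReal
            = ∫ x, Set.indicator (Set.Iic (a + m * d)) (fun _ => (1 : ℝ)) x ∂μ := by
              rw [integral_indicator_const (1 : ℝ) measurableSet_Iic]; simp; rfl
          _ ≤ ∫ x, ∑ j ∈ range (m + 1), cpw a d N j x ∂μ := by
              refine integral_mono_of_nonneg ?_ hSint ?_
              · filter_upwards with x
                exact Set.indicator_nonneg (fun _ _ => one_pos.le) x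
              · filter_upwards [hae] with x hx
                exact cpw_psum_lower a d N hdpos hN hm hx.1 (by rw [hb_eq]; exact hx.2)
          _ = _ := hsum_int
      · calc ∑ j ∈ range (m + 1), q j
            = ∫ x, ∑ j ∈ range (m + 1), cpw a d N j x ∂μ := hsum_int.symm
          _ ≤ ∫ x, Set.indicator (Set.Iic (a + (m + 1) * d)) (fun _ => (1 : ℝ)) x ∂μ := by
              refine integral_mono_of_nonneg ?_
                ((integrable_const (1 : ℝ)).indicator measurableSet_Iic) ?_
              · filter_upwards with x
                exact Finset.sum_nonneg fun j _ => cpw_nonneg a d N j x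
              · filter_upwards [hae] with x hx
                exact cpw_psum_upper a d N hdpos hN hm hx.1 (by rw [hb_eq]; exact hx.2)
          _ = (μ (Set.Iic (a + (m + 1) * d))).toReal := by
              rw [integral_indicator_const (1 : ℝ) measurableSet_Iic]; simp; rfl
    have hpt : ∀ x : ℝ, ((μ (Set.Iic x)).toReal - (ν (Set.Iic x)).toReal) ^ 2 ≤
        Set.indicator (Set.Ico a b) (fun _ => (L * d) ^ 2) x := by
      intro x
      by_cases hxa : x < a
      · have hμ0 : μ (Set.Iic x) = 0 := by
          refine measure_mono_null (fun y hy => ?_) hcompl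
          simp only [Set.mem_compl_iff, Set.mem_Icc, not_and, not_le]
          intro hay
          have := Set.mem_Iic.1 hy
          linarith
        have hν0 : ν (Set.Iic x) = 0 := by
          rw [hνIic]
          refine Finset.sum_eq_zero fun j _ => ?_
          rw [if_neg]
          rw [hz' j]
          have : (0 : ℝ) ≤ (j : ℝ) * d := mul_nonneg (Nat.cast_nonneg j) hdpos.le
          linarith
        rw [hμ0, hν0, Set.indicator_of_notMem (fun hmem => absurd hmem.1 (not_le.2 hxa))]
        norm_num
      · push_neg at hxa
        by_cases hbx : b ≤ x
        · have hμ1 : μ (Set.Iic x) = 1 := by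
            refine le_antisymm prob_le_one ?_
            rw [← hsupp]
            exact measure_mono (fun y hy => Set.mem_Iic.2 (le_trans hy.2 hbx))
          have hν1 : ν (Set.Iic x) = 1 := by
            rw [hνIic]
            have hall : ∀ j ∈ range (N + 1),
                (if z j ≤ x then ENNReal.ofReal (q j) else 0) = ENNReal.ofReal (q j) := by
              intro j hj
              rw [if_pos]
              rw [hz' j]
              have hjN : (j : ℝ) ≤ N := by
                exact_mod_cast Nat.lt_succ_iff.1 (Finset.mem_range.1 hj)
              have : (j : ℝ) * d ≤ N * d := by
                exact mul_le_mul_of_nonneg_right hjN hdpos.le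
              linarith [hb_eq]
            rw [Finset.sum_congr rfl hall, ← ENNReal.ofReal_sum_of_nonneg (fun j _ => hq0 j),
              hqsum]
            norm_num
          rw [hμ1, hν1]
          have : x ∉ Set.Ico a b := fun hmem => absurd hmem.2 (not_lt.2 hbx)
          rw [Set.indicator_of_notMem this]
          norm_num
        · push_neg at hbx
          -- a ≤ x < b
          set r : ℝ := (x - a) / d with hr
          have hr0 : 0 ≤ r := div_nonneg (by linarith) hdpos.le
          have hrN : r < N := by
            rw [hr, div_lt_iff₀ hdpos]
            have := hb_eq
            linarith
          set m : ℕ := ⌊r⌋.toNat with hmdef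
          have hfl0 : (0 : ℤ) ≤ ⌊r⌋ := Int.le_floor.2 (by exact_mod_cast hr0)
          have hmcast : ((m : ℕ) : ℝ) = (⌊r⌋ : ℝ) := by
            exact_mod_cast congrArg (fun n : ℤ => (n : ℝ)) (Int.toNat_of_nonneg hfl0)
          have hmler : (m : ℝ) ≤ r := hmcast ▸ Int.floor_le r
          have hrltm1 : r < (m : ℝ) + 1 := by
            rw [hmcast]; exact Int.lt_floor_add_one r
          have hmN : m ≤ N - 1 := by
            have h1 : ⌊r⌋ < (N : ℤ) := Int.floor_lt.2 (by exact_mod_cast hrN)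
            omega
          have hzmx : a + m * d ≤ x := by
            have : (m : ℝ) * d ≤ r * d := mul_le_mul_of_nonneg_right hmler hdpos.le
            rw [hr] at this
            rw [div_mul_cancel₀ _ hdpos.ne'] at this
            linarith
          have hxzm1 : x ≤ a + (m + 1) * d := by
            have : r * d ≤ ((m : ℝ) + 1) * d := mul_le_mul_of_nonneg_right hrltm1.le hdpos.le
            rw [hr, div_mul_cancel₀ _ hdpos.ne'] at this
            linarith
          have hiff : ∀ j : ℕ, j ∈ range (N + 1) → (z j ≤ x ↔ j ≤ m) := by
            intro j _
            rw [hz' j]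
            constructor
            · intro hjx
              have hjr : (j : ℝ) ≤ r := by
                rw [hr, le_div_iff₀ hdpos]; linarith
              have : (j : ℝ) < (m : ℝ) + 1 := lt_of_le_of_lt hjr hrltm1
              exact_mod_cast Nat.lt_succ_iff.1 (by exact_mod_cast this)
            · intro hjm
              have hjr : (j : ℝ) ≤ r := le_trans (by exact_mod_cast hjm) hmler
              rw [hr, le_div_iff₀ hdpos] at hjr
              linarith
          have hGx : (ν (Set.Iic x)).toReal = ∑ j ∈ range (m + 1), q j := by
            rw [hνIic]
            have hsub : range (m + 1) ⊆ range (N + 1) := by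
              intro j hj
              simp only [Finset.mem_range] at hj ⊢
              omega
            have hzero : ∀ j ∈ range (N + 1), j ∉ range (m + 1) →
                (if z j ≤ x then ENNReal.ofReal (q j) else 0) = 0 := by
              intro j hj hj'
              rw [if_neg]
              intro hzx
              exact hj' (Finset.mem_range.2 (Nat.lt_succ_iff.2 ((hiff j hj).1 hzx)))
            rw [← Finset.sum_subset hsub hzero]
            have hpos : ∀ j ∈ range (m + 1),
                (if z j ≤ x then ENNReal.ofReal (q j) else 0) = ENNReal.ofReal (q j) := by
              intro j hj
              rw [if_pos ((hiff j (hsub hj)).2 (Nat.lt_succ_iff.1 (Finset.mem_range.1 hj)))]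
            rw [Finset.sum_congr rfl hpos, ← ENNReal.ofReal_sum_of_nonneg (fun j _ => hq0 j),
              ENNReal.toReal_ofReal (Finset.sum_nonneg fun j _ => hq0 j)]
          obtain ⟨hQl, hQu⟩ := hQ m hmN
          have hFl : (μ (Set.Iic (a + m * d))).toReal ≤ (μ (Set.Iic x)).toReal :=
            ENNReal.toReal_mono (measure_ne_top μ _) (measure_mono (Set.Iic_subset_Iic.2 hzmx))
          have hFu : (μ (Set.Iic x)).toReal ≤ (μ (Set.Iic (a + (m + 1) * d))).toReal :=
            ENNReal.toReal_mono (measure_ne_top μ _) (measure_mono (Set.Iic_subset_Iic.2 hxzm1))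
          have hlip := hLip (a + (m + 1) * d) (a + m * d)
          have habs : |a + ((m : ℝ) + 1) * d - (a + m * d)| = d := by
            have : a + ((m : ℝ) + 1) * d - (a + m * d) = d := by ring
            rw [this, abs_of_pos hdpos]
          rw [habs] at hlip
          have hdiff := abs_le.1 hlip
          have hmem : x ∈ Set.Ico a b := ⟨hxa, hbx⟩
          rw [Set.indicator_of_mem hmem, hGx]
          exact sq_le_sq' (by linarith [hdiff.1, hdiff.2]) (by linarith [hdiff.1, hdiff.2])
    calc (∫ x : ℝ, ((μ (Set.Iic x)).toReal - (ν (Set.Iic x)).toReal) ^ 2)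
        ≤ ∫ x : ℝ, Set.indicator (Set.Ico a b) (fun _ => (L * d) ^ 2) x := by
          refine integral_mono_of_nonneg ?_ ?_ ?_
          · filter_upwards with x; positivity
          · rw [integrable_indicator_iff measurableSet_Ico]
            exact integrableOn_const measure_Ico_lt_top.ne
          · filter_upwards with x; exact hpt x
      _ = (volume (Set.Ico a b)).toReal • (L * d) ^ 2 :=
          integral_indicator_const _ measurableSet_Ico
      _ = L ^ 2 * (b - a) ^ 3 / N ^ 2 := by
          rw [Real.volume_Ico, ENNReal.toReal_ofReal (by linarith : (0:ℝ) ≤ b - a),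
            smul_eq_mul, hd]
          field_simp
end

section
/- Let n ≥ 2 and 1 ≤ k ≤ n − 1. Let ψ_k : (Fin n → Bool) → ℝ be the unit vector with ψ_k(s) = 1/√C(n,k) if s has exactly k true entries and ψ_k(s) = 0 otherwise. Let M be the real matrix indexed by (Fin n → Bool) with M(s,t) = 2 if s and t agree at every coordinate i ≥ 2 and ((s(0), s(1)) = (false, true) and (t(0), t(1)) = (true, false), or (s(0), s(1)) = (true, false) and (t(0), t(1)) = (false, true)), and M(s,t) = 0 otherwise. Then Σ_{s,t} ψ_k(s)·M(s,t)·ψ_k(t) = 4·C(n − 2, k − 1)/C(n, k) = 4k(n − k)/(n(n − 1)). -/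
/-!
`M` sends a basis string `s` with `s 0 ≠ s 1` to twice the string obtained by swapping its first
two bits, and kills every other string. Swapping bits preserves the Hamming weight, so the form
equals `2 / C(n,k)` times the number of weight-`k` strings with `s 0 ≠ s 1`; there are
`2 C(n-2,k-1)` of them (fix the first two bits, place the remaining `k - 1` ones among `n - 2`
positions). The closed form then follows from `k (n-k) C(n,k) = n (n-1) C(n-2,k-1)`.
-/

open Finset

section
variable {α : Type*}

theorem card_filter_comp_perm [Fintype α] (s : α → Bool) (σ : Equiv.Perm α) :
    #{x | (s ∘ σ) x = true} = #{x | s x = true} :=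
  card_equiv σ (by simp)

theorem agree_off_and_flip_iff [DecidableEq α] {i j : α} (hij : i ≠ j) (s t : α → Bool) :
    ((∀ x, x ≠ i → x ≠ j → s x = t x) ∧
      (s i = false ∧ s j = true ∧ t i = true ∧ t j = false ∨
        s i = true ∧ s j = false ∧ t i = false ∧ t j = true)) ↔
      s i ≠ s j ∧ t = s ∘ Equiv.swap i j := by
  constructor
  · rintro ⟨hoff, hflip⟩
    refine ⟨by grind, funext fun x => ?_⟩
    by_cases hxi : x = i
    · subst hxi
      simp only [Function.comp_apply, Equiv.swap_apply_left]
      grind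
    by_cases hxj : x = j
    · subst hxj
      simp only [Function.comp_apply, Equiv.swap_apply_right]
      grind
    simp [Equiv.swap_apply_of_ne_of_ne hxi hxj, hoff x hxi hxj]
  · rintro ⟨hne, rfl⟩
    refine ⟨fun x hxi hxj => by simp [Equiv.swap_apply_of_ne_of_ne hxi hxj], ?_⟩
    simp only [Function.comp_apply, Equiv.swap_apply_left, Equiv.swap_apply_right]
    cases h : s i <;> cases h' : s j <;> simp_all

variable [Fintype α] [DecidableEq α]

theorem card_filter_eq_false_eq_true_card_eq {i j : α} (hij : i ≠ j) (k : ℕ) :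
    #{s : α → Bool | s i = false ∧ s j = true ∧ #{x | s x = true} = k + 1} =
      (Fintype.card α - 2).choose k := by
  have hcard : #((univ.erase i).erase j) = Fintype.card α - 2 := by
    rw [card_erase_of_mem (by simp [hij.symm]), card_erase_of_mem (mem_univ i), card_univ]
    rfl
  rw [← hcard, ← card_powersetCard]
  refine card_nbij' (fun s => ({x | s x = true} : Finset α).erase j)
    (fun A x => decide (x ∈ insert j A)) ?_ ?_ ?_ ?_
  · intro s hs
    simp only [mem_coe, mem_filter, mem_univ, true_and] at hs
    simp only [mem_coe, mem_powersetCard]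
    refine ⟨fun x hx => ?_, ?_⟩
    · simp only [mem_erase, ne_eq, mem_filter, mem_univ, true_and, and_true] at hx ⊢
      grind
    · rw [card_erase_of_mem (by simp [hs.2.1]), hs.2.2]; rfl
  · intro A hA
    simp only [mem_coe, mem_powersetCard] at hA
    have hi : i ∉ A := fun h => by simpa using hA.1 h
    have hj : j ∉ A := fun h => by simpa using hA.1 h
    simp only [mem_coe, mem_filter, mem_univ, true_and, decide_eq_true_eq]
    refine ⟨by simp [hij, hi], by simp, ?_⟩
    rw [filter_mem_eq_inter, univ_inter, card_insert_of_notMem hj, hA.2]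
  · intro s hs
    simp only [mem_coe, mem_filter, mem_univ, true_and] at hs
    funext x
    by_cases hx : x = j <;> simp [hx, hs.2.1]
  · intro A hA
    simp only [mem_coe, mem_powersetCard] at hA
    have hj : j ∉ A := fun h => by simpa using hA.1 h
    ext x
    by_cases hx : x = j <;> simp [hx, hj]

theorem card_filter_ne_card_eq {i j : α} (hij : i ≠ j) (k : ℕ) :
    #{s : α → Bool | s i ≠ s j ∧ #{x | s x = true} = k + 1} =
      2 * (Fintype.card α - 2).choose k := by
  have hsplit (s : α → Bool) : s i ≠ s j ∧ #{x | s x = true} = k + 1 ↔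
      (s i = false ∧ s j = true ∧ #{x | s x = true} = k + 1) ∨
        (s j = false ∧ s i = true ∧ #{x | s x = true} = k + 1) := by
    cases s i <;> cases s j <;> simp
  rw [filter_congr fun s _ => hsplit s, filter_or, card_union_of_disjoint,
    card_filter_eq_false_eq_true_card_eq hij, card_filter_eq_false_eq_true_card_eq hij.symm,
    two_mul]
  exact disjoint_filter.2 fun s _ h h' => by simp [h.1] at h'

theorem sum_mul_ite_swap_mul {i j : α} (f : (α → Bool) → ℝ) :
    ∑ s, ∑ t, f s * (if s i ≠ s j ∧ t = s ∘ Equiv.swap i j then 2 else 0) * f t =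
      2 * ∑ s with s i ≠ s j, f s * f (s ∘ Equiv.swap i j) := by
  rw [mul_sum, sum_filter]
  refine sum_congr rfl fun s _ => ?_
  by_cases h : s i = s j
  · simp [h]
  · simp [h, mul_comm, mul_left_comm]

end

theorem choose_sub_two_pred_mul (a b : ℕ) :
    (a + 2) * (a + 1) * a.choose b = (b + 1) * (a + 1 - b) * (a + 2).choose (b + 1) := by
  have h₁ := Nat.add_one_mul_choose_eq (a + 1) b
  have h₂ := Nat.choose_mul_succ_eq a b
  calc (a + 2) * (a + 1) * a.choose b = (a + 2) * ((a + 1).choose b * (a + 1 - b)) := by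
        rw [← h₂]; ring
    _ = (b + 1) * (a + 1 - b) * (a + 2).choose (b + 1) := by rw [← mul_assoc, h₁]; ring

theorem choose_sub_two_pred_div_choose {n k : ℕ} (hk : 1 ≤ k) (hkn : k < n) :
    ((n - 2).choose (k - 1) : ℝ) / n.choose k = k * (n - k) / (n * (n - 1)) := by
  obtain ⟨b, rfl⟩ : ∃ b, k = b + 1 := ⟨k - 1, by omega⟩
  obtain ⟨a, rfl⟩ : ∃ a, n = a + 2 := ⟨n - 2, by omega⟩
  have hid := congrArg (Nat.cast : ℕ → ℝ) (choose_sub_two_pred_mul a b)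
  push_cast [Nat.cast_sub (by omega : b ≤ a + 1)] at hid
  have hC : ((a + 2).choose (b + 1) : ℝ) ≠ 0 := Nat.cast_ne_zero.2 (Nat.choose_pos hkn.le).ne'
  rw [Nat.add_sub_cancel, Nat.add_sub_cancel]
  push_cast
  rw [div_eq_div_iff hC (by ring_nf; positivity)]
  linear_combination hid

theorem stmt_5 (n k : ℕ) (hn : 2 ≤ n) (hk1 : 1 ≤ k) (hk2 : k ≤ n - 1)
    (ψ : (Fin n → Bool) → ℝ)
    (hψ : ∀ s : Fin n → Bool,
      ψ s = if (Finset.univ.filter fun i => s i = true).card = k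
        then 1 / Real.sqrt (Nat.choose n k) else 0)
    (M : (Fin n → Bool) → (Fin n → Bool) → ℝ)
    (hM : ∀ s t : Fin n → Bool, M s t =
      if (∀ i : Fin n, 2 ≤ (i : ℕ) → s i = t i) ∧
          ((s ⟨0, by omega⟩ = false ∧ s ⟨1, by omega⟩ = true ∧
            t ⟨0, by omega⟩ = true ∧ t ⟨1, by omega⟩ = false) ∨
           (s ⟨0, by omega⟩ = true ∧ s ⟨1, by omega⟩ = false ∧
            t ⟨0, by omega⟩ = false ∧ t ⟨1, by omega⟩ = true))
        then 2 else 0) :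
    (∑ s : Fin n → Bool, ∑ t : Fin n → Bool, ψ s * M s t * ψ t) =
        4 * (Nat.choose (n - 2) (k - 1) : ℝ) / (Nat.choose n k : ℝ) ∧
    (∑ s : Fin n → Bool, ∑ t : Fin n → Bool, ψ s * M s t * ψ t) =
        4 * (k : ℝ) * ((n : ℝ) - (k : ℝ)) / ((n : ℝ) * ((n : ℝ) - 1)) := by
  set i₀ : Fin n := ⟨0, by omega⟩
  set i₁ : Fin n := ⟨1, by omega⟩
  have hi : i₀ ≠ i₁ := by simp [i₀, i₁, Fin.ext_iff]
  have hM' : M = fun s t ↦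
      if s i₀ ≠ s i₁ ∧ t = s ∘ Equiv.swap i₀ i₁ then 2 else 0 := by
    have hrest (x : Fin n) : 2 ≤ (x : ℕ) ↔ x ≠ i₀ ∧ x ≠ i₁ := by
      simp only [i₀, i₁, ne_eq, Fin.ext_iff]; omega
    ext s t
    simp only [hM, hrest, and_imp, agree_off_and_flip_iff hi]
  have hψσ (s : Fin n → Bool) : ψ (s ∘ Equiv.swap i₀ i₁) = ψ s := by
    rw [hψ, hψ, card_filter_comp_perm]
  have hψsq (s : Fin n → Bool) :
      ψ s * ψ s = (if #{x | s x = true} = k then 1 else 0) / (n.choose k : ℝ) := by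
    rw [hψ]
    split_ifs
    · rw [one_div_mul_one_div, Real.mul_self_sqrt (Nat.cast_nonneg _)]
    · simp
  have hform : (∑ s : Fin n → Bool, ∑ t : Fin n → Bool, ψ s * M s t * ψ t) =
      4 * (Nat.choose (n - 2) (k - 1) : ℝ) / (Nat.choose n k : ℝ) := by
    obtain ⟨k, rfl⟩ : ∃ k', k = k' + 1 := ⟨k - 1, by omega⟩
    rw [hM', sum_mul_ite_swap_mul]
    simp only [hψσ, hψsq, ← sum_div, sum_boole, filter_filter, card_filter_ne_card_eq hi,
      Fintype.card_fin, Nat.add_sub_cancel]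
    push_cast
    ring
  refine ⟨hform, hform.trans ?_⟩
  rw [mul_div_assoc, choose_sub_two_pred_div_choose hk1 (by omega)]
  ring
end

section
/- Let n ≥ 2 and let φ : (Fin n → Bool) → ℝ be the uniform-superposition unit vector with φ(s) = 2^{−n/2} for every s. Let M be the real matrix indexed by (Fin n → Bool) with M(s,t) = 2 if s and t agree at every coordinate i ≥ 2 and ((s(0), s(1)) = (false, true) and (t(0), t(1)) = (true, false), or (s(0), s(1)) = (true, false) and (t(0), t(1)) = (false, true)), and M(s,t) = 0 otherwise. Then Σ_{s,t} φ(s)·M(s,t)·φ(t) = 1; in particular this quantity is a positive constant independent of n. -/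
theorem stmt_7 (n : ℕ) (hn : 2 ≤ n)
    (φ : (Fin n → Bool) → ℝ)
    (hφ : ∀ s : Fin n → Bool, φ s = (2 : ℝ) ^ (-(n : ℝ) / 2))
    (M : (Fin n → Bool) → (Fin n → Bool) → ℝ)
    (hM : ∀ s t : Fin n → Bool, M s t =
      if (∀ i : Fin n, 2 ≤ (i : ℕ) → s i = t i) ∧
          ((s ⟨0, by omega⟩ = false ∧ s ⟨1, by omega⟩ = true ∧
            t ⟨0, by omega⟩ = true ∧ t ⟨1, by omega⟩ = false) ∨
           (s ⟨0, by omega⟩ = true ∧ s ⟨1, by omega⟩ = false ∧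
            t ⟨0, by omega⟩ = false ∧ t ⟨1, by omega⟩ = true))
        then 2 else 0) :
    (∑ s : Fin n → Bool, ∑ t : Fin n → Bool, φ s * M s t * φ t) = 1 := by
  classical
  have h0 : (0 : ℕ) < n := by omega
  have h1 : (1 : ℕ) < n := by omega
  set i0 : Fin n := ⟨0, h0⟩ with hi0
  set i1 : Fin n := ⟨1, h1⟩ with hi1
  have hne01 : i1 ≠ i0 := by
    simp [hi0, hi1, Fin.ext_iff]
  set c : ℝ := (2 : ℝ) ^ (-(n : ℝ) / 2) with hc
  set flip : (Fin n → Bool) → (Fin n → Bool) :=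
    fun s i => if (i : ℕ) < 2 then !(s i) else s i with hflip
  -- rewrite M
  have hMcond : ∀ s t, M s t = if (s i0 ≠ s i1 ∧ t = flip s) then (2 : ℝ) else 0 := by
    intro s t
    rw [hM]
    refine if_congr ?_ rfl rfl
    constructor
    · rintro ⟨hge, h⟩
      rcases h with ⟨hs0, hs1, ht0, ht1⟩ | ⟨hs0, hs1, ht0, ht1⟩ <;>
      · refine ⟨by rw [hs0, hs1]; simp, funext fun i => ?_⟩
        by_cases hlt : (i : ℕ) < 2
        · interval_cases h : (i : ℕ)
          · have : i = i0 := by simp [hi0, Fin.ext_iff, h]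
            subst this
            simp [hflip, hs0, ht0]
            omega
          · have : i = i1 := by simp [hi1, Fin.ext_iff, h]
            subst this
            simp [hflip, hs1, ht1]
            omega
        · have := hge i (by omega)
          simp [hflip, hlt, this]
          omega
    · rintro ⟨hne, rfl⟩
      refine ⟨fun i hi => by simp [hflip, Nat.not_lt.mpr hi]; omega, ?_⟩
      have e0 : flip s i0 = !(s i0) := by simp [hflip, hi0]
      have e1 : flip s i1 = !(s i1) := by simp [hflip, hi1]
      cases hb0 : s i0 <;> cases hb1 : s i1
      · exact absurd (hb0.trans hb1.symm) hne
      · exact Or.inl (by simp [e0, e1, hb0, hb1])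
      · exact Or.inr (by simp [e0, e1, hb0, hb1])
      · exact absurd (hb0.trans hb1.symm) hne
  -- inner sum
  have hinner : ∀ s, (∑ t : Fin n → Bool, M s t) = if s i0 ≠ s i1 then (2:ℝ) else 0 := by
    intro s
    simp only [hMcond]
    by_cases hP : s i0 ≠ s i1
    · simp [hP, Finset.sum_ite_eq']
    · simp [hP]
  -- rewrite total
  have step1 : (∑ s : Fin n → Bool, ∑ t : Fin n → Bool, φ s * M s t * φ t)
      = c * c * ∑ s : Fin n → Bool, (if s i0 ≠ s i1 then (2:ℝ) else 0) := by
    rw [Finset.mul_sum]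
    refine Finset.sum_congr rfl fun s _ => ?_
    rw [← hinner s, Finset.mul_sum]
    refine Finset.sum_congr rfl fun t _ => ?_
    rw [hφ, hφ]; ring
  rw [step1]
  -- count via involution
  set g : (Fin n → Bool) → (Fin n → Bool) := fun s => Function.update s i0 (!(s i0)) with hg
  have hgg : ∀ s, g (g s) = s := by
    intro s; funext i
    by_cases hi : i = i0
    · subst hi; simp [hg]
    · simp [hg, Function.update_apply, hi]
  have hgcond : ∀ s, (g s i0 ≠ g s i1) ↔ ¬(s i0 ≠ s i1) := by
    intro s
    have e0 : g s i0 = !(s i0) := by simp [hg]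
    have e1 : g s i1 = s i1 := by simp [hg, Function.update_apply, hne01]
    rw [e0, e1]
    cases s i0 <;> cases s i1 <;> simp
  have hswap : (∑ s : Fin n → Bool, (if s i0 ≠ s i1 then (2:ℝ) else 0))
      = ∑ s : Fin n → Bool, (if ¬(s i0 ≠ s i1) then (2:ℝ) else 0) := by
    refine Finset.sum_nbij' g g (fun _ _ => Finset.mem_univ _) (fun _ _ => Finset.mem_univ _)
      (fun s _ => hgg s) (fun s _ => hgg s) (fun s _ => ?_)
    simp [hgcond s]
  have hS : (∑ s : Fin n → Bool, (if s i0 ≠ s i1 then (2:ℝ) else 0)) = (2:ℝ) ^ n := by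
    have hdouble : (∑ s : Fin n → Bool, (if s i0 ≠ s i1 then (2:ℝ) else 0))
        + (∑ s : Fin n → Bool, (if ¬(s i0 ≠ s i1) then (2:ℝ) else 0))
        = 2 * 2 ^ n := by
      rw [← Finset.sum_add_distrib]
      have : ∀ s : Fin n → Bool,
          (if s i0 ≠ s i1 then (2:ℝ) else 0) + (if ¬(s i0 ≠ s i1) then (2:ℝ) else 0) = 2 := by
        intro s; by_cases h : s i0 ≠ s i1 <;> simp [h]
      rw [Finset.sum_congr rfl fun s _ => this s, Finset.sum_const, Finset.card_univ]
      simp [Fintype.card_fun]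
      ring
    rw [← hswap] at hdouble
    linarith
  rw [hS, hc]
  rw [← Real.rpow_natCast 2 n, ← Real.rpow_add (by norm_num), ← Real.rpow_add (by norm_num)]
  norm_num
end
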